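/- Let q > 0, let k be a nonnegative integer, and let p be a real number. Then ∫_0^∞ x^k exp{−px − (1/2) q x²} dx = (−1)^k √(2π/q) · D^k_p [ (1 − Φ(p/√q)) exp{p²/(2q)} ], where D^k_p denotes the k-th derivative with respect to p of the function p ↦ (1 − Φ(p/√q)) exp{p²/(2q)}, evaluated at p. -/

import Mathlib

/-!
Completing the square, `-p x - q x²/2 = p²/(2q) - (√q x + p/√q)²/2`, and substituting
`v = √q x + p/√q` turn `∫₀^∞ e^{-px - qx²/2} dx` into `√(2π/q) (1 - Φ(p/√q)) e^{p²/(2q)}`.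
Each `p`-derivative of the left-hand side brings down a factor `-x`; differentiation under
the integral sign is justified by the Gaussian decay, uniformly for `p` in a bounded set.
-/

open MeasureTheory Set Real

theorem integral_comp_add_right_Ioi {E : Type*} [NormedAddCommGroup E] [NormedSpace ℝ E]
    (g : ℝ → E) (a d : ℝ) :
    ∫ x in Ioi a, g (x + d) = ∫ x in Ioi (a + d), g x := by
  rw [← integral_indicator measurableSet_Ioi, ← integral_indicator measurableSet_Ioi]
  conv_rhs => rw [← integral_add_right_eq_self _ d]
  congr 1 with x
  simp only [indicator, mem_Ioi, add_lt_add_iff_right]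

theorem integral_Iic_add_integral_Ioi_exp_neg_sq_div_two (a : ℝ) :
    (∫ v in Iic a, exp (-v ^ 2 / 2)) + ∫ v in Ioi a, exp (-v ^ 2 / 2) = √(2 * π) := by
  have hgauss : ∫ v, exp (-v ^ 2 / 2) = √(2 * π) := by
    simpa [div_eq_inv_mul, div_div_eq_mul_div, mul_comm] using integral_gaussian (1 / 2)
  rw [← hgauss, ← compl_Iic, integral_add_compl measurableSet_Iic]
  simpa [div_eq_inv_mul, mul_comm] using integrable_exp_neg_mul_sq (by norm_num : (0 : ℝ) < 1 / 2)

theorem integral_Ioi_exp_neg_mul_sub_sq {q : ℝ} (hq : 0 < q) (p : ℝ) :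
    ∫ x in Ioi (0 : ℝ), exp (-(p * x) - q * x ^ 2 / 2)
      = exp (p ^ 2 / (2 * q)) / √q * ∫ v in Ioi (p / √q), exp (-v ^ 2 / 2) := by
  have hsq : 0 < √q := sqrt_pos.mpr hq
  have hcompleteSq : ∀ x, exp (-(p * x) - q * x ^ 2 / 2)
      = exp (p ^ 2 / (2 * q)) * exp (-(√q * (x + p / q)) ^ 2 / 2) := fun x => by
    rw [← exp_add, mul_pow, sq_sqrt hq.le]
    congr 1
    field_simp
    ring
  have hshift : √q * (0 + p / q) = p / √q := by
    rw [zero_add]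
    field_simp
    rw [sq_sqrt hq.le, mul_comm]
  simp_rw [hcompleteSq, integral_const_mul,
    integral_comp_add_right_Ioi (fun y => exp (-(√q * y) ^ 2 / 2)),
    integral_comp_mul_left_Ioi (fun v => exp (-v ^ 2 / 2)) _ hsq, hshift, smul_eq_mul]
  ring

theorem integrableOn_Ioi_pow_mul_exp_neg_mul_sub_sq {q : ℝ} (hq : 0 < q) (a : ℝ) (n : ℕ) :
    IntegrableOn (fun x => x ^ n * exp (-(a * x) - q * x ^ 2 / 2)) (Ioi 0) := by
  have hmajorant := (integrableOn_rpow_mul_exp_neg_mul_sq (b := q / 4) (by positivity)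
    (by linarith [n.cast_nonneg (α := ℝ)] : (-1 : ℝ) < n)).const_mul (exp (a ^ 2 / q))
  refine hmajorant.mono' (by fun_prop) ?_
  filter_upwards [ae_restrict_mem measurableSet_Ioi] with x (hx : 0 < x)
  rw [norm_of_nonneg (by positivity), rpow_natCast, mul_left_comm, ← exp_add]
  gcongr
  have hsquare : 0 ≤ (q * x + 2 * a) ^ 2 / q := by positivity
  have hexpand : (q * x + 2 * a) ^ 2 / q = q * x ^ 2 + 4 * a * x + 4 * (a ^ 2 / q) := by
    field_simp
    ring
  linarith

theorem hasDerivAt_integral_Ioi_pow_mul_exp_neg_mul_sub_sq {q : ℝ} (hq : 0 < q) (k : ℕ) (p : ℝ) :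
    HasDerivAt (fun s => ∫ x in Ioi (0 : ℝ), x ^ k * exp (-(s * x) - q * x ^ 2 / 2))
      (-∫ x in Ioi (0 : ℝ), x ^ (k + 1) * exp (-(p * x) - q * x ^ 2 / 2)) p := by
  rw [← integral_neg]
  refine (hasDerivAt_integral_of_dominated_loc_of_deriv_le
    (μ := volume.restrict (Ioi 0)) (F := fun s x => x ^ k * exp (-(s * x) - q * x ^ 2 / 2))
    (F' := fun s x => -(x ^ (k + 1) * exp (-(s * x) - q * x ^ 2 / 2)))
    (Metric.ball_mem_nhds p one_pos) (.of_forall fun s => by fun_prop)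
    (integrableOn_Ioi_pow_mul_exp_neg_mul_sub_sq hq p k) (by fun_prop) ?_
    (integrableOn_Ioi_pow_mul_exp_neg_mul_sub_sq hq (-(|p| + 1)) (k + 1)) ?_).2
  · filter_upwards [ae_restrict_mem measurableSet_Ioi] with x (hx : 0 < x) s hs
    have hs' : -s ≤ |p| + 1 := by
      have := (abs_lt.mp (mem_ball_iff_norm.mp hs)).1
      linarith [neg_abs_le p]
    rw [norm_neg, norm_of_nonneg (by positivity)]
    gcongr
    nlinarith
  · filter_upwards with x s _
    have hexponent : HasDerivAt (fun s => -(s * x) - q * x ^ 2 / 2) (-x) s := by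
      simpa using ((hasDerivAt_id s).mul_const x).neg.sub_const (q * x ^ 2 / 2)
    exact (hexponent.exp.const_mul (x ^ k)).congr_deriv (by ring)

theorem iteratedDeriv_integral_Ioi_exp_neg_mul_sub_sq {q : ℝ} (hq : 0 < q) (k : ℕ) :
    iteratedDeriv k (fun s => ∫ x in Ioi (0 : ℝ), exp (-(s * x) - q * x ^ 2 / 2))
      = fun p => (-1) ^ k * ∫ x in Ioi (0 : ℝ), x ^ k * exp (-(p * x) - q * x ^ 2 / 2) := by
  induction k with
  | zero => simp
  | succ k ih =>
    ext p
    rw [iteratedDeriv_succ, ih, pow_succ, mul_neg_one, neg_mul, ← mul_neg]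
    exact ((hasDerivAt_integral_Ioi_pow_mul_exp_neg_mul_sub_sq hq k p).const_mul _).deriv

theorem integral_pow_mul_exp_eq_iteratedDeriv_gaussian
    (q : ℝ) (hq : 0 < q) (k : ℕ) (p : ℝ)
    (Φ : ℝ → ℝ)
    (hΦ : ∀ x, Φ x = (1 / Real.sqrt (2 * Real.pi)) * ∫ v in Set.Iic x, Real.exp (-v ^ 2 / 2)) :
    ∫ x in Set.Ioi (0 : ℝ), x ^ k * Real.exp (-(p * x) - q * x ^ 2 / 2)
      = (-1 : ℝ) ^ k * Real.sqrt (2 * Real.pi / q) *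
          iteratedDeriv k
            (fun s => (1 - Φ (s / Real.sqrt q)) * Real.exp (s ^ 2 / (2 * q))) p := by
  have htail : ∀ a, 1 - Φ a = (√(2 * π))⁻¹ * ∫ v in Ioi a, exp (-v ^ 2 / 2) := fun a => by
    rw [hΦ, eq_sub_of_add_eq' (integral_Iic_add_integral_Ioi_exp_neg_sq_div_two a)]
    field_simp
  have hcdf : ∀ s, (1 - Φ (s / √q)) * exp (s ^ 2 / (2 * q))
      = (√(2 * π / q))⁻¹ * ∫ x in Ioi (0 : ℝ), exp (-(s * x) - q * x ^ 2 / 2) := fun s => by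
    rw [htail, integral_Ioi_exp_neg_mul_sub_sq hq, sqrt_div' _ hq.le]
    field_simp
  have hsqrt : √(2 * π / q) ≠ 0 := by positivity
  rw [funext hcdf, iteratedDeriv_const_mul_field, iteratedDeriv_integral_Ioi_exp_neg_mul_sub_sq hq,
    mul_assoc, mul_inv_cancel_left₀ hsqrt, ← mul_assoc, ← mul_pow, neg_one_mul, neg_neg, one_pow,
    one_mul]
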